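/- arXiv:2312.07218 — 2 statements merged into one kernel-verified Lean document; each statement's English description precedes it below -/
import Mathlib

section
/- Along the particle flow dv_i/dt = -∑_j w_j A(v_i-v_j) b(v_i,v_j) with b(v_i,v_j) = ∇(δH^N_ε/δf)(v_i) - ∇(δH^N_ε/δf)(v_j), the discrete entropy H^N_ε = ∑_i w_i log(∑_j w_j ψ_ε(v_i - v_j)) satisfies dH^N_ε/dt = -(1/2)∑_{i,j} w_i w_j b(v_i,v_j)·A(v_i-v_j) b(v_i,v_j) ≤ 0. -/
open Matrix

/-- Gaussian mollifier `ψ_ε(v) = (2πε)^{-d/2} exp(-|v|²/(2ε))`. -/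
noncomputable def psiMoll (d : ℕ) (ε : ℝ) (v : EuclideanSpace ℝ (Fin d)) : ℝ :=
  (2 * Real.pi * ε) ^ (-(d : ℝ) / 2) * Real.exp (-‖v‖ ^ 2 / (2 * ε))

/-- Gradient of the Gaussian mollifier: `∇ψ_ε(v) = -(v/ε) ψ_ε(v)`. -/
noncomputable def gradPsiMoll (d : ℕ) (ε : ℝ) (v : EuclideanSpace ℝ (Fin d)) :
    EuclideanSpace ℝ (Fin d) :=
  (-(1 / ε) * psiMoll d ε v) • v

/-- Blob solution `f̃^N(x) = ∑_k w_k ψ_ε(x - u_k)`. -/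
noncomputable def blob (d N : ℕ) (ε : ℝ) (w : Fin N → ℝ)
    (u : Fin N → EuclideanSpace ℝ (Fin d)) (x : EuclideanSpace ℝ (Fin d)) : ℝ :=
  ∑ k, w k * psiMoll d ε (x - u k)

/-- Anti-symmetric regularised entropy variation
`∇(δH^N_ε/δf)(u_i) = ∇f̃^N(u_i)/f̃^N(u_i) + ∑_k w_k ∇ψ_ε(u_i - u_k)/f̃^N(u_k)`. -/
noncomputable def gradEntVar (d N : ℕ) (ε : ℝ) (w : Fin N → ℝ)
    (u : Fin N → EuclideanSpace ℝ (Fin d)) (i : Fin N) : EuclideanSpace ℝ (Fin d) :=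
  (blob d N ε w u (u i))⁻¹ • (∑ k, w k • gradPsiMoll d ε (u i - u k)) +
    ∑ k, (w k / blob d N ε w u (u k)) • gradPsiMoll d ε (u i - u k)

/-- `b(v_i, v_j) = ∇(δH^N_ε/δf)(v_i) - ∇(δH^N_ε/δf)(v_j)`. -/
noncomputable def bEnt (d N : ℕ) (ε : ℝ) (w : Fin N → ℝ)
    (u : Fin N → EuclideanSpace ℝ (Fin d)) (i j : Fin N) : EuclideanSpace ℝ (Fin d) :=
  gradEntVar d N ε w u i - gradEntVar d N ε w u j

/-!
By the chain rule, `dH/dt = ∑ᵢ wᵢ (∑ⱼ wⱼ ∇ψ_ε(vᵢ - vⱼ)·(v̇ᵢ - v̇ⱼ)) / f̃(vᵢ)`. Since `∇ψ_ε` is odd,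
exchanging `i` and `j` in the `v̇ⱼ` half turns this into `∑ᵢ wᵢ ∇(δH/δf)(vᵢ)·v̇ᵢ`: the
anti-symmetrised variation is precisely the one for which the discrete chain rule has this form.
Inserting the flow and symmetrising once more, now using that `A` is even and `b` is
anti-symmetric, gives `-(1/2) ∑ᵢⱼ wᵢwⱼ b·A b`, which is nonpositive since `A` is positive
semi-definite.
-/

open scoped RealInnerProductSpace

lemma psiMoll_pos (d : ℕ) {ε : ℝ} (hε : 0 < ε) (x : EuclideanSpace ℝ (Fin d)) :
    0 < psiMoll d ε x := by
  unfold psiMoll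
  positivity

lemma gradPsiMoll_neg (d : ℕ) (ε : ℝ) (x : EuclideanSpace ℝ (Fin d)) :
    gradPsiMoll d ε (-x) = -gradPsiMoll d ε x := by
  simp [gradPsiMoll, psiMoll]

theorem HasDerivAt.psiMoll {d : ℕ} {ε : ℝ} {c : ℝ → EuclideanSpace ℝ (Fin d)}
    {c' : EuclideanSpace ℝ (Fin d)} {t : ℝ} (hc : HasDerivAt c c' t) :
    HasDerivAt (fun s => psiMoll d ε (c s)) ⟪gradPsiMoll d ε (c t), c'⟫ t := by
  refine (((hc.norm_sq.neg.div_const (2 * ε)).exp).const_mul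
    ((2 * Real.pi * ε) ^ (-(d : ℝ) / 2))).congr_deriv ?_
  simp only [gradPsiMoll, _root_.psiMoll, real_inner_smul_left, Pi.neg_apply]
  ring

section Symmetrization

variable {ι V : Type*} [Fintype ι] [NormedAddCommGroup V] [InnerProductSpace ℝ V]

theorem sum_sum_inner_sub_div_eq (w B : ι → ℝ) (g : ι → ι → V) (hg : ∀ i j, g j i = -g i j)
    (δ : ι → V) :
    ∑ i, w i * ((∑ j, w j * ⟪g i j, δ i - δ j⟫) / B i) =
      ∑ i, w i * ⟪(B i)⁻¹ • ∑ k, w k • g i k + ∑ k, (w k / B k) • g i k, δ i⟫ := by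
  have hswap : ∑ i, ∑ j, w i * w j / B i * ⟪g i j, δ j⟫ =
      -∑ i, ∑ j, w i * w j / B j * ⟪g i j, δ i⟫ := by
    rw [Finset.sum_comm, ← Finset.sum_neg_distrib]
    refine Finset.sum_congr rfl fun i _ => ?_
    rw [← Finset.sum_neg_distrib]
    refine Finset.sum_congr rfl fun j _ => ?_
    rw [hg, inner_neg_left]
    ring
  calc ∑ i, w i * ((∑ j, w j * ⟪g i j, δ i - δ j⟫) / B i)
      = ∑ i, ∑ j, w i * w j / B i * ⟪g i j, δ i⟫ -
          ∑ i, ∑ j, w i * w j / B i * ⟪g i j, δ j⟫ := by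
        rw [← Finset.sum_sub_distrib]
        refine Finset.sum_congr rfl fun i _ => ?_
        rw [← Finset.sum_sub_distrib, Finset.sum_div, Finset.mul_sum]
        refine Finset.sum_congr rfl fun j _ => ?_
        rw [inner_sub_right]
        ring
    _ = _ := by
        rw [hswap, sub_neg_eq_add, ← Finset.sum_add_distrib]
        refine Finset.sum_congr rfl fun i _ => ?_
        simp only [inner_add_left, sum_inner, real_inner_smul_left, mul_add, Finset.mul_sum]
        congr 1 <;> exact Finset.sum_congr rfl fun j _ => by ring

theorem sum_inner_neg_sum_eq (w : ι → ℝ) (G : ι → V) (m : ι → ι → V)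
    (hm : ∀ i j, m j i = -m i j) :
    ∑ i, w i * ⟪G i, -∑ j, w j • m i j⟫ =
      -(1 / 2) * ∑ i, ∑ j, w i * w j * ⟪G i - G j, m i j⟫ := by
  have hswap : ∑ i, ∑ j, w i * w j * ⟪G j, m i j⟫ = -∑ i, ∑ j, w i * w j * ⟪G i, m i j⟫ := by
    rw [Finset.sum_comm, ← Finset.sum_neg_distrib]
    refine Finset.sum_congr rfl fun i _ => ?_
    rw [← Finset.sum_neg_distrib]
    refine Finset.sum_congr rfl fun j _ => ?_
    rw [hm, inner_neg_right]
    ring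
  have hlhs : ∑ i, w i * ⟪G i, -∑ j, w j • m i j⟫ = -∑ i, ∑ j, w i * w j * ⟪G i, m i j⟫ := by
    simp only [inner_neg_right, inner_sum, real_inner_smul_right, mul_neg, Finset.mul_sum,
      Finset.sum_neg_distrib, mul_assoc]
  simp only [hlhs, inner_sub_left, mul_sub, Finset.sum_sub_distrib, hswap]
  ring

end Symmetrization

theorem hasDerivAt_discreteEntropy {d N : ℕ} {ε : ℝ} (hε : 0 < ε) {w : Fin N → ℝ}
    (hw : ∀ i, 0 < w i) {v : Fin N → ℝ → EuclideanSpace ℝ (Fin d)}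
    {v' : Fin N → EuclideanSpace ℝ (Fin d)} {t : ℝ} (hv : ∀ i, HasDerivAt (v i) (v' i) t) :
    HasDerivAt (fun s => ∑ i, w i * Real.log (∑ j, w j * psiMoll d ε (v i s - v j s)))
      (∑ i, w i * ⟪gradEntVar d N ε w (fun k => v k t) i, v' i⟫) t := by
  have hblob : ∀ i, 0 < ∑ j, w j * psiMoll d ε (v i t - v j t) := fun i =>
    Finset.sum_pos (fun j _ => mul_pos (hw j) (psiMoll_pos d hε _)) ⟨i, Finset.mem_univ i⟩
  refine (HasDerivAt.fun_sum fun i _ => ((HasDerivAt.fun_sum fun j _ =>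
    ((hv i).sub (hv j)).psiMoll.const_mul (w j)).log (hblob i).ne').const_mul (w i)).congr_deriv ?_
  refine sum_sum_inner_sub_div_eq _ _ (fun i j => gradPsiMoll d ε (v i t - v j t))
    (fun i j => ?_) v'
  rw [← neg_sub, gradPsiMoll_neg]

lemma bEnt_swap (d N : ℕ) (ε : ℝ) (w : Fin N → ℝ) (u : Fin N → EuclideanSpace ℝ (Fin d))
    (i j : Fin N) : bEnt d N ε w u j i = -bEnt d N ε w u i j :=
  (neg_sub _ _).symm

lemma toLp_mulVec_bEnt_swap {d N : ℕ} {ε : ℝ} {w : Fin N → ℝ}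
    {A : EuclideanSpace ℝ (Fin d) → Matrix (Fin d) (Fin d) ℝ} (hAeven : ∀ q, A q = A (-q))
    (u : Fin N → EuclideanSpace ℝ (Fin d)) (i j : Fin N) :
    (WithLp.toLp 2 (A (u j - u i) *ᵥ bEnt d N ε w u j i) : EuclideanSpace ℝ (Fin d)) =
      -WithLp.toLp 2 (A (u i - u j) *ᵥ bEnt d N ε w u i j) := by
  rw [← neg_sub, ← hAeven, bEnt_swap, WithLp.ofLp_neg, mulVec_neg, WithLp.toLp_neg]

lemma inner_toLp_mulVec {d : ℕ} (M : Matrix (Fin d) (Fin d) ℝ) (x : EuclideanSpace ℝ (Fin d)) :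
    ⟪x, WithLp.toLp 2 (M *ᵥ x)⟫ = x ⬝ᵥ M *ᵥ x := by
  rw [EuclideanSpace.inner_eq_star_dotProduct, star_trivial, dotProduct_comm]

theorem discrete_entropy_dissipation_general (d N : ℕ) (ε : ℝ) (hε : 0 < ε)
    (w : Fin N → ℝ) (hw : ∀ i, 0 < w i)
    (A : EuclideanSpace ℝ (Fin d) → Matrix (Fin d) (Fin d) ℝ)
    (hAeven : ∀ q, A q = A (-q))
    (hApsd : ∀ q x, 0 ≤ dotProduct x ((A q).mulVec x))
    (v : Fin N → ℝ → EuclideanSpace ℝ (Fin d)) (t : ℝ)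
    (hode : ∀ i, ∀ s : ℝ,
      HasDerivAt (v i)
        (-(∑ j, w j • (WithLp.toLp 2 ((A (v i s - v j s)).mulVec
            (bEnt d N ε w (fun k => v k s) i j)) : EuclideanSpace ℝ (Fin d)))) s) :
    HasDerivAt (fun s => ∑ i, w i * Real.log (∑ j, w j * psiMoll d ε (v i s - v j s)))
        (-(1 / 2) * ∑ i, ∑ j, w i * w j *
          dotProduct (bEnt d N ε w (fun k => v k t) i j)
            ((A (v i t - v j t)).mulVec (bEnt d N ε w (fun k => v k t) i j))) t ∧
      -(1 / 2) * (∑ i, ∑ j, w i * w j *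
          dotProduct (bEnt d N ε w (fun k => v k t) i j)
            ((A (v i t - v j t)).mulVec (bEnt d N ε w (fun k => v k t) i j))) ≤ 0 := by
  have hdiss : 0 ≤ ∑ i, ∑ j, w i * w j *
      bEnt d N ε w (fun k => v k t) i j ⬝ᵥ A (v i t - v j t) *ᵥ bEnt d N ε w (fun k => v k t) i j :=
    Finset.sum_nonneg fun i _ => Finset.sum_nonneg fun j _ =>
      mul_nonneg (mul_pos (hw i) (hw j)).le (hApsd _ _)
  refine ⟨?_, by linarith⟩
  convert hasDerivAt_discreteEntropy hε hw fun i => hode i t using 1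
  rw [sum_inner_neg_sum_eq w _ _ (toLp_mulVec_bEnt_swap hAeven fun k => v k t)]
  simp only [← inner_toLp_mulVec]
  rfl

/-- Dissipation of the discrete entropy along the particle flow. -/
theorem discrete_entropy_dissipation (d N : ℕ) (ε : ℝ) (hε : 0 < ε)
    (w : Fin N → ℝ) (hw : ∀ i, 0 < w i)
    (A : EuclideanSpace ℝ (Fin d) → Matrix (Fin d) (Fin d) ℝ)
    (hAsymm : ∀ q, (A q).IsSymm)
    (hAeven : ∀ q, A q = A (-q))
    (hApsd : ∀ q x, 0 ≤ dotProduct x ((A q).mulVec x))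
    (v : Fin N → ℝ → EuclideanSpace ℝ (Fin d)) (t : ℝ)
    (hode : ∀ i, ∀ s : ℝ,
      HasDerivAt (v i)
        (-(∑ j, w j • (WithLp.toLp 2 ((A (v i s - v j s)).mulVec
            (bEnt d N ε w (fun k => v k s) i j)) : EuclideanSpace ℝ (Fin d)))) s) :
    HasDerivAt (fun s => ∑ i, w i * Real.log (∑ j, w j * psiMoll d ε (v i s - v j s)))
        (-(1 / 2) * ∑ i, ∑ j, w i * w j *
          dotProduct (bEnt d N ε w (fun k => v k t) i j)
            ((A (v i t - v j t)).mulVec (bEnt d N ε w (fun k => v k t) i j))) t ∧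
      -(1 / 2) * (∑ i, ∑ j, w i * w j *
          dotProduct (bEnt d N ε w (fun k => v k t) i j)
            ((A (v i t - v j t)).mulVec (bEnt d N ε w (fun k => v k t) i j))) ≤ 0 :=
  discrete_entropy_dissipation_general d N ε hε w hw A hAeven hApsd v t hode
end

section
/- (Trubnikov integral, Coulomb case) With f(V) = (ρ/(πT))exp(-|V|²/T) and f(q) = (ρ/(4πT))exp(-|q|²/(4T)) on ℝ², the integral I_C = ∬ (v_y q_y q_x²/|q|³) f(V) f(q) dV dq, where v_y = V_y + q_y/2, equals ρ²√(πT)/16. -/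
/-! The integrand is `f(V)` times a function of `q` that is affine in `V_y`; the part linear in
`V_y` is odd in `q_y` and integrates to zero, so the double integral is
`(∫ f(V) dV) · ½ ∫ q_x² q_y² / |q|³ f(q) dq`. In polar coordinates the latter separates into the
Gaussian moment `∫₀^∞ r² e^{-r²/(4T)} dr = 2√π T^{3/2}` and `∫ sin²θ cos²θ dθ = π/4`. -/

open MeasureTheory

/-- Centred Gaussian `f(V) = (ρ/(πT)) exp(-|V|²/T)`. -/
noncomputable def fV (ρ T : ℝ) (V : EuclideanSpace ℝ (Fin 2)) : ℝ :=
  ρ / (Real.pi * T) * Real.exp (-‖V‖ ^ 2 / T)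

/-- Centred Gaussian `f(q) = (ρ/(4πT)) exp(-|q|²/(4T))`. -/
noncomputable def fq (ρ T : ℝ) (q : EuclideanSpace ℝ (Fin 2)) : ℝ :=
  ρ / (4 * Real.pi * T) * Real.exp (-‖q‖ ^ 2 / (4 * T))

open Real Set

theorem integral_euclideanSpace_fin_two_eq_polarCoord {F : Type*} [NormedAddCommGroup F]
    [NormedSpace ℝ F] (f : EuclideanSpace ℝ (Fin 2) → F) :
    ∫ q, f q = ∫ p in polarCoord.target, p.1 • f !₂[p.1 * cos p.2, p.1 * sin p.2] := by
  let e := Complex.orthonormalBasisOneI.repr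
  rw [← (e.measurePreserving).integral_comp e.toHomeomorph.measurableEmbedding,
    ← Complex.integral_comp_polarCoord_symm]
  congr! 3 with p

theorem integral_euclideanSpace_fin_two_of_polar_separable {f : EuclideanSpace ℝ (Fin 2) → ℝ}
    {g h : ℝ → ℝ} (hf : ∀ r > 0, ∀ θ, r * f !₂[r * cos θ, r * sin θ] = g r * h θ) :
    ∫ q, f q = (∫ r in Ioi 0, g r) * ∫ θ in Ioo (-π) π, h θ := by
  rw [integral_euclideanSpace_fin_two_eq_polarCoord, polarCoord_target, Measure.volume_eq_prod,
    ← setIntegral_prod_mul]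
  exact setIntegral_congr_fun (measurableSet_Ioi.prod measurableSet_Ioo)
    fun p hp => hf p.1 hp.1 p.2

theorem integrable_norm_pow_mul_exp_neg_mul_sq {E : Type*} [NormedAddCommGroup E]
    [NormedSpace ℝ E] [MeasurableSpace E] [BorelSpace E] [FiniteDimensional ℝ E]
    (μ : Measure E) [μ.IsAddHaarMeasure] {b : ℝ} (hb : 0 < b) (k : ℕ) :
    Integrable (fun x : E => ‖x‖ ^ k * exp (-b * ‖x‖ ^ 2)) μ := by
  nontriviality E
  rw [integrable_fun_norm_addHaar μ (f := fun y => y ^ k * exp (-b * y ^ 2))]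
  have := integrableOn_rpow_mul_exp_neg_mul_sq hb
    (s := ((Module.finrank ℝ E - 1 + k : ℕ) : ℝ)) (neg_one_lt_zero.trans_le (Nat.cast_nonneg _))
  refine this.congr_fun (fun y _ => ?_) measurableSet_Ioi
  simp only [Real.rpow_natCast, smul_eq_mul, pow_add, mul_assoc]

theorem abs_apply_one_pow_mul_apply_zero_sq_div_norm_cube_le (q : EuclideanSpace ℝ (Fin 2))
    (n : ℕ) : |q 1 ^ (n + 1) * q 0 ^ 2 / ‖q‖ ^ 3| ≤ ‖q‖ ^ n := by
  rcases (norm_nonneg q).eq_or_lt with hq | hq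
  · simp [norm_eq_zero.mp hq.symm]
  have h0 : |q 0| ≤ ‖q‖ := PiLp.norm_apply_le q 0
  have h1 : |q 1| ≤ ‖q‖ := PiLp.norm_apply_le q 1
  rw [abs_div, abs_mul, abs_pow, abs_pow, abs_pow, abs_norm, div_le_iff₀ (by positivity)]
  calc |q 1| ^ (n + 1) * |q 0| ^ 2 ≤ ‖q‖ ^ (n + 1) * ‖q‖ ^ 2 := by gcongr
    _ = ‖q‖ ^ n * ‖q‖ ^ 3 := by ring

theorem integrable_apply_one_pow_mul_apply_zero_sq_div_norm_cube_mul_exp {b : ℝ} (hb : 0 < b)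
    (n : ℕ) : Integrable fun q : EuclideanSpace ℝ (Fin 2) =>
      q 1 ^ (n + 1) * q 0 ^ 2 / ‖q‖ ^ 3 * exp (-b * ‖q‖ ^ 2) := by
  refine (integrable_norm_pow_mul_exp_neg_mul_sq volume hb n).mono' ?_ (.of_forall fun q => ?_)
  · exact Measurable.aestronglyMeasurable (by fun_prop)
  · rw [norm_mul, norm_of_nonneg (exp_pos _).le]
    exact mul_le_mul_of_nonneg_right
      (abs_apply_one_pow_mul_apply_zero_sq_div_norm_cube_le q n) (exp_pos _).le

theorem integral_apply_one_pow_mul_apply_zero_sq_div_norm_cube_mul_exp (b : ℝ) (n : ℕ) :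
    ∫ q : EuclideanSpace ℝ (Fin 2), q 1 ^ (n + 1) * q 0 ^ 2 / ‖q‖ ^ 3 * exp (-b * ‖q‖ ^ 2) =
      (∫ r in Ioi 0, r ^ (n + 1) * exp (-b * r ^ 2)) *
        ∫ θ in Ioo (-π) π, sin θ ^ (n + 1) * cos θ ^ 2 := by
  refine integral_euclideanSpace_fin_two_of_polar_separable fun r hr θ => ?_
  have hnorm : ‖(!₂[r * cos θ, r * sin θ] : EuclideanSpace ℝ (Fin 2))‖ = r := by
    rw [EuclideanSpace.norm_eq, Fin.sum_univ_two]
    simp [mul_pow, ← mul_add, sqrt_sq hr.le]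
  simp only [hnorm, Matrix.cons_val_zero, Matrix.cons_val_one]
  field_simp
  ring

theorem integral_Ioi_sq_mul_exp_neg_mul_sq {b : ℝ} (hb : 0 < b) :
    ∫ r in Ioi 0, r ^ 2 * exp (-b * r ^ 2) = √π / (4 * b * √b) := by
  have := integral_rpow_mul_exp_neg_mul_rpow two_pos (by norm_num : (-1 : ℝ) < 2) hb
  simp only [rpow_two] at this
  have hΓ : Gamma ((2 + 1) / 2) = √π / 2 := by
    rw [show (2 + 1) / 2 = (1 / 2 : ℝ) + 1 by norm_num, Gamma_add_one (by norm_num),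
      Gamma_one_half_eq]
    ring
  have hpow : b ^ (-(2 + 1) / 2 : ℝ) = (b * √b)⁻¹ := by
    rw [show (-(2 + 1) / 2 : ℝ) = -(1 + 1 / 2) by norm_num, rpow_neg hb.le,
      rpow_add hb, rpow_one, ← sqrt_eq_rpow]
  rw [this, hΓ, hpow]
  field_simp
  ring

theorem integral_sin_mul_cos_sq_Ioo : ∫ θ in Ioo (-π) π, sin θ ^ 1 * cos θ ^ 2 = 0 := by
  rw [← integral_Ioc_eq_integral_Ioo, ← intervalIntegral.integral_of_le (by linarith [pi_pos])]
  simp only [pow_one, integral_sin_mul_cos_sq, cos_neg, sub_self, zero_div]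

theorem integral_sin_sq_mul_cos_sq_Ioo : ∫ θ in Ioo (-π) π, sin θ ^ 2 * cos θ ^ 2 = π / 4 := by
  rw [← integral_Ioc_eq_integral_Ioo, ← intervalIntegral.integral_of_le (by linarith [pi_pos]),
    integral_sin_sq_mul_cos_sq]
  have h : sin (4 * π) = 0 := by exact_mod_cast sin_nat_mul_pi 4
  simp only [mul_neg, sin_neg, h, neg_zero, sub_self, zero_div, sub_zero, sub_neg_eq_add]
  ring

theorem integral_fV (ρ : ℝ) {T : ℝ} (hT : 0 < T) : ∫ V, fV ρ T V = ρ := by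
  have h : ∀ V : EuclideanSpace ℝ (Fin 2), fV ρ T V = ρ / (π * T) * exp (-T⁻¹ * ‖V‖ ^ 2) := by
    intro V; rw [fV, neg_mul, inv_mul_eq_div, neg_div]
  simp_rw [h]
  rw [integral_const_mul, GaussianFourier.integral_rexp_neg_mul_sq_norm (inv_pos.mpr hT),
    finrank_euclideanSpace_fin]
  field_simp
  norm_num
  ring

theorem fq_eq (ρ T : ℝ) (q : EuclideanSpace ℝ (Fin 2)) :
    fq ρ T q = ρ / (4 * π * T) * exp (-(4 * T)⁻¹ * ‖q‖ ^ 2) := by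
  rw [fq, neg_mul, inv_mul_eq_div, neg_div]

theorem integral_coulomb_mul_fq (ρ a : ℝ) {T : ℝ} (hT : 0 < T) :
    ∫ q : EuclideanSpace ℝ (Fin 2), (a + q 1 / 2) * q 1 * q 0 ^ 2 / ‖q‖ ^ 3 * fq ρ T q =
      ρ * √(π * T) / 16 := by
  have hb : 0 < (4 * T)⁻¹ := by positivity
  have hint := integrable_apply_one_pow_mul_apply_zero_sq_div_norm_cube_mul_exp hb
  calc ∫ q : EuclideanSpace ℝ (Fin 2), (a + q 1 / 2) * q 1 * q 0 ^ 2 / ‖q‖ ^ 3 * fq ρ T q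
      = ∫ q : EuclideanSpace ℝ (Fin 2), ρ / (4 * π * T) *
          (a * (q 1 ^ (0 + 1) * q 0 ^ 2 / ‖q‖ ^ 3 * exp (-(4 * T)⁻¹ * ‖q‖ ^ 2)) +
            q 1 ^ (1 + 1) * q 0 ^ 2 / ‖q‖ ^ 3 * exp (-(4 * T)⁻¹ * ‖q‖ ^ 2) / 2) := by
        congr 1 with q
        rw [fq_eq]
        ring
    _ = ρ / (4 * π * T) * (√π / (4 * (4 * T)⁻¹ * √(4 * T)⁻¹) * (π / 4) / 2) := by
        rw [integral_const_mul, integral_add ((hint 0).const_mul a) ((hint 1).div_const 2),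
          integral_const_mul, integral_div,
          integral_apply_one_pow_mul_apply_zero_sq_div_norm_cube_mul_exp,
          integral_apply_one_pow_mul_apply_zero_sq_div_norm_cube_mul_exp,
          integral_sin_mul_cos_sq_Ioo, integral_sin_sq_mul_cos_sq_Ioo,
          integral_Ioi_sq_mul_exp_neg_mul_sq hb]
        ring
    _ = ρ * √(π * T) / 16 := by
        rw [sqrt_inv, sqrt_mul' _ hT.le, sqrt_mul' _ hT.le, show √4 = 2 by norm_num]
        field_simp
        norm_num

theorem trubnikov_integral_coulomb_general (ρ T : ℝ) (hT : 0 < T) :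
    (∫ V : EuclideanSpace ℝ (Fin 2), ∫ q : EuclideanSpace ℝ (Fin 2),
        (V 1 + q 1 / 2) * q 1 * (q 0) ^ 2 / ‖q‖ ^ 3 * fV ρ T V * fq ρ T q)
      = ρ ^ 2 * Real.sqrt (Real.pi * T) / 16 := by
  calc (∫ V : EuclideanSpace ℝ (Fin 2), ∫ q : EuclideanSpace ℝ (Fin 2),
        (V 1 + q 1 / 2) * q 1 * (q 0) ^ 2 / ‖q‖ ^ 3 * fV ρ T V * fq ρ T q)
      = ∫ V : EuclideanSpace ℝ (Fin 2), fV ρ T V *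
          ∫ q : EuclideanSpace ℝ (Fin 2), (V 1 + q 1 / 2) * q 1 * q 0 ^ 2 / ‖q‖ ^ 3 * fq ρ T q := by
        congr 1 with V
        rw [← integral_const_mul]
        congr 1 with q
        ring
    _ = ρ ^ 2 * √(π * T) / 16 := by
        simp_rw [integral_coulomb_mul_fq ρ _ hT]
        rw [integral_mul_const, integral_fV ρ hT]
        ring

/-- Trubnikov integral, Coulomb case. -/
theorem trubnikov_integral_coulomb (ρ T : ℝ) (hρ : 0 < ρ) (hT : 0 < T) :
    (∫ V : EuclideanSpace ℝ (Fin 2), ∫ q : EuclideanSpace ℝ (Fin 2),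
        (V 1 + q 1 / 2) * q 1 * (q 0) ^ 2 / ‖q‖ ^ 3 * fV ρ T V * fq ρ T q)
      = ρ ^ 2 * Real.sqrt (Real.pi * T) / 16 :=
  trubnikov_integral_coulomb_general ρ T hT
end
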